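/- arXiv:1309.1771 — 6 statements merged into one kernel-verified Lean document; each statement's English description precedes it below -/
import Mathlib

section
/- Let C_{α,β} = F_{i_1}, F_{j_1}, …, F_{i_s}, F_{j_s} be a simplicial even walk in a simplicial complex Δ. Then for every index i in the support of α there exist two distinct indices j, k in the support of β such that F_i ∩ F_j ≠ ∅ and F_i ∩ F_k ≠ ∅; and symmetrically, for every j in the support of β there exist two distinct indices i, k in the support of α with F_j ∩ F_i ≠ ∅ and F_j ∩ F_k ≠ ∅. -/
/-!
Take `i` in the support of `α` and any `j` in the support of `β`. The walk condition yields a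
vertex `x ∈ F i \ F j` with `deg_α x ≤ deg_β x`; since `x ∈ F i`, `deg_α x > 0`, so `x` lies in
some facet `F k` of `β`, and `k ≠ j` because `x ∉ F j`. Applying this once to an arbitrary `j`
and once more to the `k` it produces gives two distinct facets of `β` meeting `F i`. The
condition is symmetric in `α` and `β`, which gives the second half.
-/

open Finset

/-- The `α`-degree of a vertex `x` : the number of entries `t` of the tuple `α`
with `x ∈ F (α t)`, counted with multiplicity. -/
def walkDeg {V : Type*} [DecidableEq V] {q s : ℕ} (F : Fin q → Finset V)
    (α : Fin s → Fin q) (x : V) : ℕ :=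
  (Finset.univ.filter fun t : Fin s => x ∈ F (α t)).card

/-- The sequence of facets `C_{α,β} = F_{i_1},F_{j_1},…,F_{i_s},F_{j_s}` is a
simplicial even walk. -/
def IsEvenWalk {V : Type*} [DecidableEq V] {q s : ℕ} (F : Fin q → Finset V)
    (α β : Fin s → Fin q) : Prop :=
  2 ≤ s ∧ Disjoint (Set.range α) (Set.range β) ∧
    ∀ i ∈ Set.range α, ∀ j ∈ Set.range β,
      ¬ (↑(F i \ F j) ⊆ {x : V | walkDeg F β x < walkDeg F α x}) ∧
      ¬ (↑(F j \ F i) ⊆ {x : V | walkDeg F α x < walkDeg F β x})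

/-- The facets of a simplicial complex: each is nonempty, and none contains another. -/
def IsFacetFamily {V : Type*} [DecidableEq V] {q : ℕ} (F : Fin q → Finset V) : Prop :=
  (∀ i, (F i).Nonempty) ∧ ∀ i j : Fin q, F i ⊆ F j → i = j

section

variable {V : Type*} [DecidableEq V] {q s : ℕ} {F : Fin q → Finset V}

lemma exists_mem_of_walkDeg_pos {α : Fin s → Fin q} {x : V} (h : 0 < walkDeg F α x) :
    ∃ t, x ∈ F (α t) := by
  obtain ⟨t, ht⟩ := card_pos.mp h
  exact ⟨t, (mem_filter.mp ht).2⟩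

lemma walkDeg_pos_of_mem {α : Fin s → Fin q} {x : V} {t : Fin s} (hx : x ∈ F (α t)) :
    0 < walkDeg F α x :=
  card_pos.mpr ⟨t, by simp [hx]⟩

namespace IsEvenWalk

variable {α β : Fin s → Fin q}

lemma symm (h : IsEvenWalk F α β) : IsEvenWalk F β α := by
  obtain ⟨hs, hdisj, hcond⟩ := h
  exact ⟨hs, hdisj.symm, fun j hj i hi => (hcond i hi j hj).symm⟩

lemma exists_ne_inter_nonempty (h : IsEvenWalk F α β) {i j : Fin q}
    (hi : i ∈ Set.range α) (hj : j ∈ Set.range β) :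
    ∃ k ∈ Set.range β, k ≠ j ∧ (F i ∩ F k).Nonempty := by
  obtain ⟨x, hx, hdeg⟩ := Set.not_subset.mp (h.2.2 i hi j hj).1
  rw [mem_coe, mem_sdiff] at hx
  replace hdeg : walkDeg F α x ≤ walkDeg F β x := not_lt.mp hdeg
  obtain ⟨t, rfl⟩ := hi
  obtain ⟨u, hu⟩ := exists_mem_of_walkDeg_pos ((walkDeg_pos_of_mem hx.1).trans_le hdeg)
  exact ⟨β u, ⟨u, rfl⟩, fun hk => hx.2 (hk ▸ hu), x, mem_inter.mpr ⟨hx.1, hu⟩⟩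

lemma exists_two_inter_nonempty (h : IsEvenWalk F α β) {i : Fin q} (hi : i ∈ Set.range α) :
    ∃ j ∈ Set.range β, ∃ k ∈ Set.range β,
      j ≠ k ∧ (F i ∩ F j).Nonempty ∧ (F i ∩ F k).Nonempty := by
  have hs : 0 < s := by linarith [h.1]
  obtain ⟨k, hk, -, hik⟩ := h.exists_ne_inter_nonempty hi ⟨⟨0, hs⟩, rfl⟩
  obtain ⟨j, hj, hjk, hij⟩ := h.exists_ne_inter_nonempty hi hk
  exact ⟨j, hj, k, hk, hjk, hij, hik⟩

end IsEvenWalk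

end

theorem stmt0_general {V : Type*} [DecidableEq V] {q s : ℕ} (F : Fin q → Finset V)
    (α β : Fin s → Fin q) (h : IsEvenWalk F α β) :
    (∀ i ∈ Set.range α, ∃ j ∈ Set.range β, ∃ k ∈ Set.range β,
        j ≠ k ∧ (F i ∩ F j).Nonempty ∧ (F i ∩ F k).Nonempty) ∧
    (∀ j ∈ Set.range β, ∃ i ∈ Set.range α, ∃ k ∈ Set.range α,
        i ≠ k ∧ (F j ∩ F i).Nonempty ∧ (F j ∩ F k).Nonempty) :=
  ⟨fun _ hi => h.exists_two_inter_nonempty hi, fun _ hj => h.symm.exists_two_inter_nonempty hj⟩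

theorem stmt0 {V : Type*} [DecidableEq V] {q s : ℕ} (F : Fin q → Finset V)
    (hF : IsFacetFamily F) (α β : Fin s → Fin q) (h : IsEvenWalk F α β) :
    (∀ i ∈ Set.range α, ∃ j ∈ Set.range β, ∃ k ∈ Set.range β,
        j ≠ k ∧ (F i ∩ F j).Nonempty ∧ (F i ∩ F k).Nonempty) ∧
    (∀ j ∈ Set.range β, ∃ i ∈ Set.range α, ∃ k ∈ Set.range α,
        i ≠ k ∧ (F j ∩ F i).Nonempty ∧ (F j ∩ F k).Nonempty) :=
  stmt0_general F α β h
end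

section
/- Every special cycle of even length is a simplicial even walk: if F_1, …, F_{2s} (s ≥ 2) is a special cycle under the written order, then setting α = (1,3,…,2s−1) and β = (2,4,…,2s), the sequence C_{α,β} = F_1, F_2, …, F_{2s} is a simplicial even walk. -/
open Finset

/-- Successor modulo `m` on `Fin m`. -/
def cyclicNext {m : ℕ} (i : Fin m) : Fin m := ⟨(i.val + 1) % m, Nat.mod_lt _ i.pos⟩

/-- A sequence of `m ≥ 3` distinct facets with empty total intersection is a
special cycle if consecutive facets (cyclically) share a vertex not belonging
to any other facet of the sequence. -/
def IsSpecialCycle {V : Type*} [DecidableEq V] {m : ℕ} (G : Fin m → Finset V) : Prop :=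
  3 ≤ m ∧ Function.Injective G ∧ (∀ x : V, ∃ i, x ∉ G i) ∧
    ∀ i : Fin m, (G i ∩ G (cyclicNext i)).Nonempty ∧
      ¬ (G i ∩ G (cyclicNext i) ⊆
          (Finset.univ.filter fun j => j ≠ i ∧ j ≠ cyclicNext i).biUnion G)

/-
For every cyclic edge `{k, k+1}` of a special cycle pick a vertex lying in exactly those two
facets. Since the cycle has even length, exactly one of `k`, `k+1` is even, so this vertex has
`α`-degree and `β`-degree both equal to one. Given distinct `i` and `j`, the edge `{i, i+1}`, or
`{i-1, i}` if `j = i+1` (these differ because the cycle has at least three facets), yields a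
vertex of `F i \ F j` of equal degrees; so neither strict-degree inclusion can hold.
-/

lemma cyclicNext_val {m : ℕ} (i : Fin m) :
    (cyclicNext i).val = if i.val + 1 = m then 0 else i.val + 1 := by
  have := i.isLt
  split_ifs with h
  · simp [cyclicNext, h]
  · exact Nat.mod_eq_of_lt (by omega)

lemma exists_cyclicNext_edge_mem_not_mem {m : ℕ} (hm : 3 ≤ m) {i j : Fin m} (hij : i ≠ j) :
    ∃ k : Fin m, (i = k ∨ i = cyclicNext k) ∧ ¬(j = k ∨ j = cyclicNext k) := by
  by_cases hj : j = cyclicNext i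
  · refine ⟨⟨if (i : ℕ) = 0 then m - 1 else i - 1, by split_ifs <;> omega⟩, ?_⟩
    simp only [hj, Fin.ext_iff, cyclicNext_val]
    have := i.isLt
    split_ifs <;> grind
  · exact ⟨i, Or.inl rfl, by simpa [Ne.symm hij] using hj⟩

namespace IsSpecialCycle

variable {V : Type*} [DecidableEq V] {m : ℕ} {G : Fin m → Finset V}

lemma exists_forall_mem_iff (h : IsSpecialCycle G) (k : Fin m) :
    ∃ x, ∀ a, x ∈ G a ↔ a = k ∨ a = cyclicNext k := by
  obtain ⟨x, hx, hx_other⟩ := Finset.not_subset.mp (h.2.2.2 k).2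
  rw [Finset.mem_inter] at hx
  refine ⟨x, fun a => ⟨fun hxa => ?_, ?_⟩⟩
  · by_contra hak
    push Not at hak
    exact hx_other (Finset.mem_biUnion.mpr ⟨a, by simpa using hak, hxa⟩)
  · rintro (rfl | rfl)
    exacts [hx.1, hx.2]

lemma exists_mem_sdiff_forall_mem_iff (h : IsSpecialCycle G) {i j : Fin m} (hij : i ≠ j) :
    ∃ k x, x ∈ G i \ G j ∧ ∀ a, x ∈ G a ↔ a = k ∨ a = cyclicNext k := by
  obtain ⟨k, hik, hjk⟩ := exists_cyclicNext_edge_mem_not_mem h.1 hij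
  obtain ⟨x, hx⟩ := h.exists_forall_mem_iff k
  exact ⟨k, x, Finset.mem_sdiff.mpr ⟨(hx i).mpr hik, fun hxj => hjk ((hx j).mp hxj)⟩, hx⟩

end IsSpecialCycle

def evenIdx (s : ℕ) (t : Fin s) : Fin (2 * s) := ⟨2 * t.val, by omega⟩

def oddIdx (s : ℕ) (t : Fin s) : Fin (2 * s) := ⟨2 * t.val + 1, by omega⟩

lemma disjoint_range_evenIdx_oddIdx (s : ℕ) :
    Disjoint (Set.range (evenIdx s)) (Set.range (oddIdx s)) := by
  rw [Set.disjoint_left]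
  rintro _ ⟨a, rfl⟩ ⟨b, hab⟩
  simp only [evenIdx, oddIdx, Fin.ext_iff] at hab
  omega

lemma evenIdx_ne_oddIdx {s : ℕ} (a b : Fin s) : evenIdx s a ≠ oddIdx s b := fun hab =>
  Set.disjoint_left.mp (disjoint_range_evenIdx_oddIdx s) ⟨a, rfl⟩ ⟨b, hab.symm⟩

lemma card_filter_two_mul_add_eq_or_eq {s r a b : ℕ} (hr : r < 2) (ha : a < 2 * s)
    (hb : b < 2 * s) (hab : a % 2 ≠ b % 2) :
    #{t : Fin s | 2 * (t : ℕ) + r = a ∨ 2 * (t : ℕ) + r = b} = 1 := by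
  rw [Finset.card_eq_one]
  refine ⟨⟨(if a % 2 = r then a else b) / 2, by split_ifs <;> omega⟩, ?_⟩
  ext t
  have := t.isLt
  simp only [Finset.mem_filter, Finset.mem_univ, true_and, Finset.mem_singleton, Fin.ext_iff]
  split_ifs <;> omega

section WalkDeg

variable {V : Type*} [DecidableEq V] {s : ℕ} (F : Fin (2 * s) → Finset V) {x : V}
  {k : Fin (2 * s)}

lemma walkDeg_evenIdx_eq_one (hx : ∀ a, x ∈ F a ↔ a = k ∨ a = cyclicNext k) :
    walkDeg F (evenIdx s) x = 1 := by
  have := k.isLt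
  simpa [walkDeg, hx, evenIdx, Fin.ext_iff] using
    card_filter_two_mul_add_eq_or_eq (s := s) (r := 0) (by omega) this (cyclicNext k).isLt
      (by rw [cyclicNext_val]; split_ifs <;> omega)

lemma walkDeg_oddIdx_eq_one (hx : ∀ a, x ∈ F a ↔ a = k ∨ a = cyclicNext k) :
    walkDeg F (oddIdx s) x = 1 := by
  have := k.isLt
  simpa [walkDeg, hx, oddIdx, Fin.ext_iff] using
    card_filter_two_mul_add_eq_or_eq (s := s) (r := 1) (by omega) this (cyclicNext k).isLt
      (by rw [cyclicNext_val]; split_ifs <;> omega)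

end WalkDeg

theorem stmt5 {V : Type*} [DecidableEq V] {s : ℕ} (hs : 2 ≤ s)
    (F : Fin (2 * s) → Finset V) (h : IsSpecialCycle F) :
    IsEvenWalk F (fun t : Fin s => ⟨2 * t.val, by have := t.isLt; omega⟩)
      (fun t : Fin s => ⟨2 * t.val + 1, by have := t.isLt; omega⟩) := by
  show IsEvenWalk F (evenIdx s) (oddIdx s)
  refine ⟨hs, disjoint_range_evenIdx_oddIdx s, ?_⟩
  rintro _ ⟨a, rfl⟩ _ ⟨b, rfl⟩
  have hab := evenIdx_ne_oddIdx a b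
  obtain ⟨k, x, hx, hxk⟩ := h.exists_mem_sdiff_forall_mem_iff hab
  obtain ⟨l, y, hy, hyl⟩ := h.exists_mem_sdiff_forall_mem_iff hab.symm
  refine ⟨fun hsub => ?_, fun hsub => ?_⟩
  · simpa [walkDeg_evenIdx_eq_one F hxk, walkDeg_oddIdx_eq_one F hxk] using hsub hx
  · simpa [walkDeg_evenIdx_eq_one F hyl, walkDeg_oddIdx_eq_one F hyl] using hsub hy
end

section
/- Let G be a simple graph and let e_1, e_2, …, e_{2s} (s ≥ 2) be a walk in G, i.e., e_t = {x_t, x_{t+1}} is an edge of G for each t = 1,…,2s, for some list of vertices x_1,…,x_{2s+1}. Then the walk is closed (x_1 = x_{2s+1}) if and only if every vertex of G occurs among the odd-indexed edges e_1, e_3, …, e_{2s−1} (counted with multiplicity) exactly as many times as it occurs among the even-indexed edges e_2, e_4, …, e_{2s} (counted with multiplicity); equivalently, the product of the edge monomials x_t x_{t+1} over odd t equals the product over even t. -/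
/-!
Index edges from `0`, edge `t` joining `x t` and `x (t + 1)`. Every interior vertex `x t`
(`0 < t < 2s`) lies on exactly one edge of each parity, namely edges `t - 1` and `t`, while `x 0`
lies only on the even edge `0` and `x (2s)` only on the odd edge `2s - 1`. As consecutive
vertices are distinct, every `v` satisfies `#even(v) + [v = x (2s)] = #odd(v) + [v = x 0]`, so
the two counts agree for all `v` exactly when `x 0 = x (2s)`.
-/

open Finset Fin.NatCast

section

variable {V : Type*} [DecidableEq V]

def edgeIncidences (y : ℕ → V) (p : ℕ) (v : V) (n : ℕ) : ℕ :=
  ∑ t ∈ range n, if t % 2 = p ∧ (v = y t ∨ v = y (t + 1)) then 1 else 0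

lemma ite_eq_or_eq_of_ne {v a b : V} (hab : a ≠ b) :
    (if v = a ∨ v = b then 1 else 0 : ℕ) = (if v = a then 1 else 0) + (if v = b then 1 else 0) := by
  by_cases ha : v = a <;> by_cases hb : v = b <;> simp_all

lemma edgeIncidences_zero_add_ite_eq (y : ℕ → V) (v : V) (s : ℕ)
    (hy : ∀ t < 2 * s, y t ≠ y (t + 1)) :
    edgeIncidences y 0 v (2 * s) + (if v = y (2 * s) then 1 else 0) =
      edgeIncidences y 1 v (2 * s) + (if v = y 0 then 1 else 0) := by
  induction s with
  | zero => simp [edgeIncidences]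
  | succ n ih =>
    have ih := ih fun t ht => hy t (by omega)
    have h2n : 2 * (n + 1) = 2 * n + 1 + 1 := by ring
    have hmod : (2 * n + 1) % 2 = 1 := by omega
    simp only [edgeIncidences, h2n, sum_range_succ] at ih ⊢
    simp only [Nat.mul_mod_right, hmod, true_and, zero_ne_one, one_ne_zero, false_and,
      if_false, ite_eq_or_eq_of_ne (hy (2 * n) (by omega)),
      ite_eq_or_eq_of_ne (hy (2 * n + 1) (by omega))]
    omega

lemma edgeIncidences_eq_iff (y : ℕ → V) (s : ℕ) (hy : ∀ t < 2 * s, y t ≠ y (t + 1)) :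
    (∀ v, edgeIncidences y 0 v (2 * s) = edgeIncidences y 1 v (2 * s)) ↔ y 0 = y (2 * s) := by
  constructor
  · intro h
    have := edgeIncidences_zero_add_ite_eq y (y 0) s hy
    rw [h, if_pos rfl] at this
    by_contra hne
    rw [if_neg hne] at this
    omega
  · intro h v
    have := edgeIncidences_zero_add_ite_eq y v s hy
    rw [h] at this
    omega

lemma card_filter_eq_edgeIncidences {m : ℕ} (x : Fin (m + 1) → V) (p : ℕ) (v : V) :
    #{t : Fin m | t.val % 2 = p ∧ (v = x t.castSucc ∨ v = x t.succ)} =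
      edgeIncidences (fun n => x n) p v m := by
  rw [card_filter, edgeIncidences, ← Fin.sum_univ_eq_sum_range]
  refine sum_congr rfl fun t _ => ?_
  rw [Fin.natCast_eq_mk (by omega : t.val < m + 1),
    Fin.natCast_eq_mk (by omega : t.val + 1 < m + 1)]
  rfl

end

theorem stmt6 {V : Type*} [DecidableEq V] (G : SimpleGraph V) {s : ℕ}
    (x : Fin (2 * s + 1) → V)
    (hwalk : ∀ t : Fin (2 * s), G.Adj (x t.castSucc) (x t.succ)) :
    x ⟨0, by omega⟩ = x ⟨2 * s, by omega⟩ ↔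
      ∀ v : V,
        (Finset.univ.filter fun t : Fin (2 * s) =>
            t.val % 2 = 0 ∧ (v = x t.castSucc ∨ v = x t.succ)).card =
        (Finset.univ.filter fun t : Fin (2 * s) =>
            t.val % 2 = 1 ∧ (v = x t.castSucc ∨ v = x t.succ)).card := by
  have hy : ∀ t < 2 * s, x t ≠ x (t + 1 : ℕ) := fun t ht => by
    rw [Fin.natCast_eq_mk (by omega), Fin.natCast_eq_mk (by omega)]
    exact (hwalk ⟨t, ht⟩).ne
  rw [← Fin.natCast_eq_mk, ← Fin.natCast_eq_mk]
  simp only [card_filter_eq_edgeIncidences, edgeIncidences_eq_iff _ s hy]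
end

section
/- Let G be a simple graph with edges e_1,…,e_q and let e_{i_1}, …, e_{i_{2s}} (s ≥ 2) be a sequence of edges of G such that the subgraph spanned by these edges is connected and {i_1,i_3,…,i_{2s−1}} ∩ {i_2,i_4,…,i_{2s}} = ∅. Set α = (i_1,i_3,…,i_{2s−1}) and β = (i_2,i_4,…,i_{2s}). Then C_{α,β} = e_{i_1},…,e_{i_{2s}} is a simplicial even walk if and only if deg_α(x) = deg_β(x) for every vertex x of C_{α,β}, i.e., the sets {x : deg_α(x) > deg_β(x)} and {x : deg_α(x) < deg_β(x)} are both empty. -/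
/-!
A vertex `x` with `deg_α x > deg_β x` lies on some `α`-edge `{x, v}`. The walk condition for this
edge against every `β`-edge forces `v` off all `β`-edges while `deg_α v ≤ deg_β v`, which is absurd
since `deg_α v > 0`. Hence `deg_α = deg_β` everywhere. Conversely, when the degrees agree both
excess sets are empty, while `e i \ e j` is nonempty for distinct edges.
-/

open Finset

/-- The vertex set of the even walk `C_{α,β}`. -/
def walkVerts {V : Type*} [DecidableEq V] {q s : ℕ} (F : Fin q → Finset V)
    (α β : Fin s → Fin q) : Finset V :=
  Finset.univ.biUnion fun t : Fin s => F (α t) ∪ F (β t)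

/-- Two vertices are adjacent in (the graph formed by the facets of) `C_{α,β}`. -/
def walkAdj {V : Type*} [DecidableEq V] {q s : ℕ} (F : Fin q → Finset V)
    (α β : Fin s → Fin q) (u v : V) : Prop :=
  u ≠ v ∧ ∃ t : Fin s,
    (u ∈ F (α t) ∧ v ∈ F (α t)) ∨ (u ∈ F (β t) ∧ v ∈ F (β t))

section

variable {V : Type*} [DecidableEq V] {q s : ℕ} {F : Fin q → Finset V}

theorem walkDeg_pos_iff {α : Fin s → Fin q} {x : V} :
    0 < walkDeg F α x ↔ ∃ t, x ∈ F (α t) := by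
  simp [walkDeg, card_pos, filter_nonempty_iff]

theorem Finset.exists_eq_pair_of_card_eq_two {A : Finset V} {x : V} (hA : #A = 2) (hx : x ∈ A) :
    ∃ v, v ≠ x ∧ A = {x, v} := by
  obtain ⟨v, hv⟩ := card_eq_one.mp (by rw [card_erase_of_mem hx, hA] : #(A.erase x) = 1)
  refine ⟨v, fun hvx => ?_, by rw [← hv, insert_erase hx]⟩
  simpa [hvx] using hv.ge (mem_singleton_self v)

theorem Finset.sdiff_nonempty_of_card_eq_of_ne {A B : Finset V} (hAB : #A = #B) (hne : A ≠ B) :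
    (A \ B).Nonempty :=
  sdiff_nonempty.mpr fun hle => hne (eq_of_subset_of_card_le hle hAB.ge)

theorem walkDeg_le_of_forall_not_sdiff_subset (hcard : ∀ i, #(F i) = 2)
    {α β : Fin s → Fin q}
    (hcond : ∀ i ∈ Set.range α, ∀ j ∈ Set.range β,
      ¬ (↑(F i \ F j) ⊆ {x : V | walkDeg F β x < walkDeg F α x}))
    (x : V) : walkDeg F α x ≤ walkDeg F β x := by
  by_contra! hlt
  obtain ⟨t, hxt⟩ := walkDeg_pos_iff.mp (by omega : 0 < walkDeg F α x)
  obtain ⟨v, hvx, hev⟩ := exists_eq_pair_of_card_eq_two (hcard _) hxt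
  have hv : ∀ t', v ∉ F (β t') ∧ walkDeg F α v ≤ walkDeg F β v := by
    intro t'
    obtain ⟨w, hw, hw_le⟩ := Set.not_subset.mp (hcond _ ⟨t, rfl⟩ _ ⟨t', rfl⟩)
    simp only [coe_sdiff, Set.mem_sdiff, mem_coe, hev, mem_insert, mem_singleton,
      Set.mem_ofPred_eq, not_lt] at hw hw_le
    obtain ⟨rfl | rfl, hw⟩ := hw
    · omega
    · exact ⟨hw, hw_le⟩
  obtain ⟨t', ht'⟩ :=
    walkDeg_pos_iff.mp ((walkDeg_pos_iff.mpr ⟨t, by simp [hev]⟩).trans_le (hv t).2)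
  exact (hv t').1 ht'

end

theorem stmt8_general {V : Type*} [DecidableEq V] {q s : ℕ} (e : Fin q → Finset V)
    (hcard : ∀ i, (e i).card = 2) (hinj : Function.Injective e)
    (α β : Fin s → Fin q) (hs : 2 ≤ s)
    (hdisj : Disjoint (Set.range α) (Set.range β)) :
    IsEvenWalk e α β ↔ ∀ x : V, walkDeg e α x = walkDeg e β x := by
  refine ⟨fun ⟨_, _, hcond⟩ x => le_antisymm ?_ ?_, fun hdeg => ⟨hs, hdisj, ?_⟩⟩
  · exact walkDeg_le_of_forall_not_sdiff_subset hcard (fun i hi j hj => (hcond i hi j hj).1) x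
  · exact walkDeg_le_of_forall_not_sdiff_subset hcard (fun i hi j hj => (hcond j hj i hi).2) x
  intro i hi j hj
  have hne : e i ≠ e j := hinj.ne (hdisj.ne_of_mem hi hj)
  have hcard_eq : #(e i) = #(e j) := by rw [hcard, hcard]
  simp only [hdeg, lt_irrefl, Set.ofPred_false]
  exact ⟨(coe_nonempty.mpr (sdiff_nonempty_of_card_eq_of_ne hcard_eq hne)).not_subset_empty,
    (coe_nonempty.mpr (sdiff_nonempty_of_card_eq_of_ne hcard_eq.symm hne.symm)).not_subset_empty⟩

theorem stmt8 {V : Type*} [DecidableEq V] {q s : ℕ} (e : Fin q → Finset V)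
    (hcard : ∀ i, (e i).card = 2) (hinj : Function.Injective e)
    (α β : Fin s → Fin q) (hs : 2 ≤ s)
    (hdisj : Disjoint (Set.range α) (Set.range β))
    (hconn : ∀ u v : V, u ∈ walkVerts e α β → v ∈ walkVerts e α β →
        Relation.ReflTransGen (walkAdj e α β) u v) :
    IsEvenWalk e α β ↔ ∀ x : V, walkDeg e α x = walkDeg e β x :=
  stmt8_general e hcard hinj α β hs hdisj
end

section
/- Let Δ = ⟨F_1,…,F_q⟩ be a simplicial complex with facet ideal I = (f_1,…,f_q) in R = K[x_1,…,x_n], let s ≥ 2, and let α, β be tuples of length s in {1,…,q} with disjoint supports. If C_{α,β} is not a simplicial even walk, then T_{α,β} ∈ J_1·S + J_{s−1}·S, where S = R[T_1,…,T_q]. -/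
open Finset MvPolynomial

/-- The squarefree monomial `f_i = ∏_{x ∈ F_i} x` of a facet `F_i`. -/
noncomputable def facetMonomial (K : Type*) [Field K] {n q : ℕ}
    (F : Fin q → Finset (Fin n)) (i : Fin q) : MvPolynomial (Fin n) K :=
  ∏ x ∈ F i, X x

/-- The `R`-algebra map `ψ : S = R[T_1,…,T_q] → R[t]`, `T_i ↦ f_i·t`. -/
noncomputable def reesHom (K : Type*) [Field K] {n q : ℕ} (F : Fin q → Finset (Fin n)) :
    MvPolynomial (Fin q) (MvPolynomial (Fin n) K) →ₐ[MvPolynomial (Fin n) K]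
      Polynomial (MvPolynomial (Fin n) K) :=
  aeval fun i : Fin q => Polynomial.C (facetMonomial K F i) * Polynomial.X

/-- The defining ideal `J = ker ψ` of the Rees algebra `R[It]`. -/
noncomputable def reesIdeal (K : Type*) [Field K] {n q : ℕ} (F : Fin q → Finset (Fin n)) :
    Ideal (MvPolynomial (Fin q) (MvPolynomial (Fin n) K)) :=
  RingHom.ker (reesHom K F)

/-- The ideal generated by the facet monomials is of linear type: its Rees ideal `J`
is generated by its elements that are homogeneous of degree `1` in `T_1,…,T_q`. -/
def IsLinearType (K : Type*) [Field K] {n q : ℕ} (F : Fin q → Finset (Fin n)) : Prop :=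
  reesIdeal K F = Ideal.span {g | g ∈ reesIdeal K F ∧ g.IsHomogeneous 1}

/-- The Taylor binomial `T_{α,β} = (lcm(f_α,f_β)/f_α)·T_α - (lcm(f_α,f_β)/f_β)·T_β`
for the squarefree monomials `f_i = ∏_{x ∈ F_i} x`: the exponent of `x` in `f_α` is
`walkDeg F α x`, so `lcm(f_α,f_β)/f_α` has exponent vector
`x ↦ walkDeg F β x - walkDeg F α x` (truncated subtraction). -/
noncomputable def Tsf (K : Type*) [Field K] {n q s : ℕ} (F : Fin q → Finset (Fin n))
    (α β : Fin s → Fin q) : MvPolynomial (Fin q) (MvPolynomial (Fin n) K) :=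
  C (monomial (Finsupp.equivFunOnFinite.symm
        fun x : Fin n => walkDeg F β x - walkDeg F α x) (1 : K)) * ∏ t, X (α t) -
  C (monomial (Finsupp.equivFunOnFinite.symm
        fun x : Fin n => walkDeg F α x - walkDeg F β x) (1 : K)) * ∏ t, X (β t)

/-!
Write `a, b, a', b'` for the vertex degrees of `α, β` and of the shortened tuples
`α', β'` obtained by deleting one entry `i = α t₀`, `j = β u₀`. If every vertex of
`F_j \ F_i` has `a < b`, then
`T_{α,β} = x^g T_{α'} · T_{(i),(j)} + x^h T_j · T_{α',β'}` with
`g = (b - a) - ([x ∈ F_j] - [x ∈ F_i])` and `h = (a - b) - (a' - b')`, and the hypothesis is exactly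
what makes these exponents compatible pointwise. `T_{(i),(j)}` is a linear form in `J`, and
the other failure of the even-walk condition is the same case for `T_{β,α} = -T_{α,β}`.
-/

section WalkDegree

variable {V : Type*} [DecidableEq V] {q : ℕ} (F : Fin q → Finset V)

lemma walkDeg_eq_sum {s : ℕ} (α : Fin s → Fin q) (x : V) :
    walkDeg F α x = ∑ t, if x ∈ F (α t) then 1 else 0 :=
  Finset.card_filter _ _

lemma walkDeg_const_one (i : Fin q) (x : V) :
    walkDeg F (fun _ : Fin 1 => i) x = if x ∈ F i then 1 else 0 := by
  simp [walkDeg_eq_sum]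

lemma walkDeg_succAbove {s : ℕ} (α : Fin (s + 1) → Fin q) (t₀ : Fin (s + 1)) :
    walkDeg F α = walkDeg F (fun _ : Fin 1 => α t₀) + walkDeg F (α ∘ t₀.succAbove) := by
  funext x
  simp only [Pi.add_apply, walkDeg_eq_sum, Fin.sum_univ_succAbove _ t₀, Function.comp_apply,
    Fin.sum_univ_one]

lemma walkDeg_le {s : ℕ} (α : Fin s → Fin q) (x : V) : walkDeg F α x ≤ s :=
  (Finset.card_filter_le _ _).trans (Finset.card_fin s).le

end WalkDegree

lemma equivFunOnFinite_symm_add {α M : Type*} [Finite α] [AddZeroClass M] (v w : α → M) :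
    Finsupp.equivFunOnFinite.symm (v + w) =
      Finsupp.equivFunOnFinite.symm v + Finsupp.equivFunOnFinite.symm w := by
  ext x
  simp

section ReesAlgebra

variable {K : Type*} [Field K] {n q : ℕ}

noncomputable def coeffMonomial (K : Type*) [Field K] {n : ℕ} (q : ℕ) (v : Fin n → ℕ) :
    MvPolynomial (Fin q) (MvPolynomial (Fin n) K) :=
  C (monomial (Finsupp.equivFunOnFinite.symm v) 1)

lemma coeffMonomial_add (v w : Fin n → ℕ) :
    coeffMonomial K q (v + w) = coeffMonomial K q v * coeffMonomial K q w := by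
  rw [coeffMonomial, coeffMonomial, coeffMonomial, ← map_mul, monomial_mul, one_mul,
    equivFunOnFinite_symm_add]

lemma Tsf_eq {s : ℕ} (F : Fin q → Finset (Fin n)) (α β : Fin s → Fin q) :
    Tsf K F α β = coeffMonomial K q (walkDeg F β - walkDeg F α) * ∏ t, X (α t)
      - coeffMonomial K q (walkDeg F α - walkDeg F β) * ∏ t, X (β t) := rfl

lemma Tsf_swap {s : ℕ} (F : Fin q → Finset (Fin n)) (α β : Fin s → Fin q) :
    Tsf K F β α = -Tsf K F α β := by
  rw [Tsf_eq, Tsf_eq, neg_sub]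

lemma prod_facetMonomial {s : ℕ} (F : Fin q → Finset (Fin n)) (α : Fin s → Fin q) :
    ∏ t, facetMonomial K F (α t) = monomial (Finsupp.equivFunOnFinite.symm (walkDeg F α)) 1 := by
  have : Finsupp.equivFunOnFinite.symm (walkDeg F α) =
      ∑ t, ∑ x ∈ F (α t), Finsupp.single x 1 := by
    ext x
    simp [walkDeg_eq_sum, Finsupp.finsetSum_apply, Finsupp.single_apply]
  simp only [facetMonomial, this, ← monomial_sum_one, X]

lemma Tsf_mem_reesIdeal {s : ℕ} (F : Fin q → Finset (Fin n)) (α β : Fin s → Fin q) :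
    Tsf K F α β ∈ reesIdeal K F := by
  -- both sides are the exponent vector of `lcm(f_α, f_β)`
  have hmax : walkDeg F β - walkDeg F α + walkDeg F α =
      walkDeg F α - walkDeg F β + walkDeg F β := by
    funext x
    simp only [Pi.add_apply, Pi.sub_apply]
    omega
  have himage : ∀ γ : Fin s → Fin q, reesHom K F (∏ t, X (γ t)) =
      Polynomial.C (monomial (Finsupp.equivFunOnFinite.symm (walkDeg F γ)) 1) *
        Polynomial.X ^ s := by
    intro γ
    rw [reesHom, map_prod]
    simp only [aeval_X, Finset.prod_mul_distrib, ← map_prod, prod_facetMonomial,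
      Finset.prod_const, Finset.card_univ, Fintype.card_fin]
  rw [reesIdeal, RingHom.mem_ker, Tsf_eq, map_sub, map_mul, map_mul, himage, himage]
  have hC : ∀ v, reesHom K F (coeffMonomial K q v) =
      Polynomial.C (monomial (Finsupp.equivFunOnFinite.symm v) 1) := fun v => aeval_C _ _
  simp only [hC, ← mul_assoc, ← Polynomial.C_mul, monomial_mul, mul_one,
    ← equivFunOnFinite_symm_add, hmax, sub_self]

lemma Tsf_isHomogeneous {s : ℕ} (F : Fin q → Finset (Fin n)) (α β : Fin s → Fin q) :
    (Tsf K F α β).IsHomogeneous s := by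
  have hprod : ∀ γ : Fin s → Fin q,
      (∏ t, X (γ t) : MvPolynomial (Fin q) (MvPolynomial (Fin n) K)).IsHomogeneous s := by
    intro γ
    simpa using IsHomogeneous.prod Finset.univ (fun t => X (γ t)) (fun _ => 1)
      (fun t _ => isHomogeneous_X _ (γ t))
  exact ((hprod α).C_mul _).sub ((hprod β).C_mul _)

lemma exists_Tsf_eq_add_of_sdiff_subset {s : ℕ} (F : Fin q → Finset (Fin n))
    (α β : Fin (s + 1) → Fin q) (t₀ u₀ : Fin (s + 1))
    (H : ↑(F (β u₀) \ F (α t₀)) ⊆ {x : Fin n | walkDeg F α x < walkDeg F β x}) :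
    ∃ A B, Tsf K F α β = A * Tsf K F (fun _ : Fin 1 => α t₀) (fun _ => β u₀)
      + B * Tsf K F (α ∘ t₀.succAbove) (β ∘ u₀.succAbove) := by
  have ha := walkDeg_succAbove F α t₀
  have hb := walkDeg_succAbove F β u₀
  rw [Tsf_eq, Tsf_eq, Tsf_eq]
  set a := walkDeg F α
  set b := walkDeg F β
  set ι := walkDeg F (fun _ : Fin 1 => α t₀) with hι
  set κ := walkDeg F (fun _ : Fin 1 => β u₀) with hκ
  set a' := walkDeg F (α ∘ t₀.succAbove)
  set b' := walkDeg F (β ∘ u₀.succAbove)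
  have hH : ∀ x, ι x < κ x → a x < b x := by
    intro x hx
    simp only [hι, hκ, walkDeg_const_one] at hx
    by_cases hj : x ∈ F (β u₀)
    · by_cases hi : x ∈ F (α t₀)
      · simp [hi, hj] at hx
      · exact H (by simp [hi, hj])
    · simp [hj] at hx
  have pointwise : ∀ x, ι x ≤ 1 ∧ κ x ≤ 1 ∧ a x = ι x + a' x ∧ b x = κ x + b' x ∧
      (ι x < κ x → a x < b x) :=
    fun x => ⟨walkDeg_le F _ x, walkDeg_le F _ x, congrFun ha x, congrFun hb x, hH x⟩
  set g := (b - a) - (κ - ι)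
  set h := (a - b) - (a' - b')
  have e1 : b - a = g + (κ - ι) := by
    funext x; have := pointwise x; simp only [g, Pi.add_apply, Pi.sub_apply]; omega
  have e2 : a - b = h + (a' - b') := by
    funext x; have := pointwise x; simp only [h, Pi.add_apply, Pi.sub_apply]; omega
  have e3 := congrArg (coeffMonomial K q) (show g + (ι - κ) = h + (b' - a') by
    funext x; have := pointwise x; simp only [g, h, Pi.add_apply, Pi.sub_apply]; omega)
  rw [coeffMonomial_add, coeffMonomial_add] at e3
  refine ⟨coeffMonomial K q g * ∏ t, X (α (t₀.succAbove t)), coeffMonomial K q h * X (β u₀),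
    ?_⟩
  rw [e1, e2, coeffMonomial_add, coeffMonomial_add, Fin.prod_univ_succAbove _ t₀,
    Fin.prod_univ_succAbove _ u₀, Fin.prod_univ_one, Fin.prod_univ_one]
  simp only [Function.comp_apply]
  linear_combination (X (β u₀) * ∏ t, X (α (t₀.succAbove t))) * e3

/-- `J_1·S + J_s·S`. -/
noncomputable def linearPlusTaylorIdeal (K : Type*) [Field K] {n q : ℕ}
    (F : Fin q → Finset (Fin n)) (s : ℕ) :
    Ideal (MvPolynomial (Fin q) (MvPolynomial (Fin n) K)) :=
  Ideal.span ({g | g ∈ reesIdeal K F ∧ g.IsHomogeneous 1} ∪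
    {p | ∃ α' β' : Fin s → Fin q, Disjoint (Set.range α') (Set.range β') ∧ p = Tsf K F α' β'})

lemma Tsf_mem_linearPlusTaylorIdeal_of_sdiff_subset {s : ℕ} (F : Fin q → Finset (Fin n))
    (α β : Fin (s + 1) → Fin q) (hdisj : Disjoint (Set.range α) (Set.range β))
    (t₀ u₀ : Fin (s + 1))
    (H : ↑(F (β u₀) \ F (α t₀)) ⊆ {x : Fin n | walkDeg F α x < walkDeg F β x}) :
    Tsf K F α β ∈ linearPlusTaylorIdeal K F s := by
  obtain ⟨A, B, hAB⟩ := exists_Tsf_eq_add_of_sdiff_subset (K := K) F α β t₀ u₀ H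
  have hlin : Tsf K F (fun _ : Fin 1 => α t₀) (fun _ => β u₀) ∈ linearPlusTaylorIdeal K F s :=
    Ideal.subset_span (Or.inl ⟨Tsf_mem_reesIdeal F _ _, Tsf_isHomogeneous F _ _⟩)
  have hlower : Tsf K F (α ∘ t₀.succAbove) (β ∘ u₀.succAbove) ∈ linearPlusTaylorIdeal K F s :=
    Ideal.subset_span (Or.inr ⟨_, _, hdisj.mono (Set.range_comp_subset_range _ _)
      (Set.range_comp_subset_range _ _), rfl⟩)
  rw [hAB]
  exact Ideal.add_mem _ (Ideal.mul_mem_left _ A hlin) (Ideal.mul_mem_left _ B hlower)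

end ReesAlgebra

theorem stmt13_general {K : Type*} [Field K] {n q s : ℕ} (hs : 2 ≤ s)
    (F : Fin q → Finset (Fin n))
    (α β : Fin s → Fin q) (hdisj : Disjoint (Set.range α) (Set.range β))
    (hnw : ¬ IsEvenWalk F α β) :
    Tsf K F α β ∈ Ideal.span
      ({g | g ∈ reesIdeal K F ∧ g.IsHomogeneous 1} ∪
        {p | ∃ α' β' : Fin (s - 1) → Fin q,
          Disjoint (Set.range α') (Set.range β') ∧ p = Tsf K F α' β'}) := by
  obtain ⟨s, rfl⟩ : ∃ s', s = s' + 1 := ⟨s - 1, by omega⟩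
  obtain ⟨t₀, u₀, hsub⟩ : ∃ t₀ u₀,
      ↑(F (α t₀) \ F (β u₀)) ⊆ {x : Fin n | walkDeg F β x < walkDeg F α x} ∨
        ↑(F (β u₀) \ F (α t₀)) ⊆ {x : Fin n | walkDeg F α x < walkDeg F β x} := by
    by_contra! h
    exact hnw ⟨hs, hdisj, by rintro _ ⟨t₀, rfl⟩ _ ⟨u₀, rfl⟩; exact h t₀ u₀⟩
  change Tsf K F α β ∈ linearPlusTaylorIdeal K F s
  rcases hsub with hα | hβ
  · rw [← neg_neg (Tsf K F α β), ← Tsf_swap]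
    exact neg_mem (Tsf_mem_linearPlusTaylorIdeal_of_sdiff_subset F β α hdisj.symm u₀ t₀ hα)
  · exact Tsf_mem_linearPlusTaylorIdeal_of_sdiff_subset F α β hdisj t₀ u₀ hβ

theorem stmt13 {K : Type*} [Field K] {n q s : ℕ} (hs : 2 ≤ s)
    (F : Fin q → Finset (Fin n)) (hF : IsFacetFamily F)
    (α β : Fin s → Fin q) (hdisj : Disjoint (Set.range α) (Set.range β))
    (hnw : ¬ IsEvenWalk F α β) :
    Tsf K F α β ∈ Ideal.span
      ({g | g ∈ reesIdeal K F ∧ g.IsHomogeneous 1} ∪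
        {p | ∃ α' β' : Fin (s - 1) → Fin q,
          Disjoint (Set.range α') (Set.range β') ∧ p = Tsf K F α' β'}) :=
  stmt13_general hs F α β hdisj hnw
end

section
/- Let I be a squarefree monomial ideal in R = K[x_1,…,x_n] and suppose that the facet complex F(I) contains no simplicial even walk. Then I is of linear type, i.e., the defining ideal J of the Rees algebra R[It] is generated by its elements of degree 1 in the variables T_1,…,T_q. -/
open Finset MvPolynomial

/-! `J` is spanned over `K` by the binomials `x^a T^d - x^b T^e` with `|d| = |e|` and
`a + σ d = b + σ e`, where `σ d = facetExpSum F d` is the exponent of `∏ f_i ^ d_i`: indeed `ψ`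
maps the monomial basis of `S` onto the monomial basis of `R[t]`. Such a binomial lies in the
ideal generated by the linear part of `J`, by induction on `|d|`. A variable `T_i` common to `d`
and `e` factors out. Otherwise `d` and `e` enumerate tuples `α`, `β` with disjoint supports, and
as `C_{α,β}` is not an even walk there are `i ∈ supp d`, `j ∈ supp e` with (say)
`F_j \ F_i ⊆ {σ d < σ e}`, which forces `F_j \ F_i ⊆ supp a`. Then, with `χ_i` the exponent
of `f_i`, `x^a T_i - x^{a + χ_i - χ_j} T_j` is a linear element of `J`, and trading `T_i` for
`T_j` lowers the degree. -/

theorem Finsupp.exists_eq_add_single_of_ne_zero {ι : Type*} {d : ι →₀ ℕ} {i : ι} (hi : d i ≠ 0) :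
    ∃ d', d = d' + Finsupp.single i 1 :=
  ⟨d - Finsupp.single i 1,
    (tsub_add_cancel_of_le (Finsupp.single_le_iff.mpr (Nat.one_le_iff_ne_zero.mpr hi))).symm⟩

theorem Finsupp.exists_fin_sum_single_eq {ι : Type*} :
    ∀ (s : ℕ) (d : ι →₀ ℕ), d.degree = s → ∃ α : Fin s → ι, ∑ t, Finsupp.single (α t) 1 = d
  | 0, d, hd => ⟨finZeroElim, by simp [(Finsupp.degree_eq_zero_iff d).mp hd]⟩
  | s + 1, d, hd => by
    obtain ⟨i, hi⟩ : ∃ i, d i ≠ 0 := by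
      by_contra! h
      simp [show d = 0 from Finsupp.ext h] at hd
    obtain ⟨d, rfl⟩ := Finsupp.exists_eq_add_single_of_ne_zero hi
    obtain ⟨α, hα⟩ := exists_fin_sum_single_eq s d (by simpa using hd)
    exact ⟨Fin.snoc α i, by simp [Fin.sum_univ_castSucc, hα]⟩

theorem Finsupp.apply_ne_zero_of_sum_single_eq {ι : Type*} {s : ℕ} {α : Fin s → ι}
    {d : ι →₀ ℕ} (hα : ∑ t, Finsupp.single (α t) 1 = d) (t : Fin s) : d (α t) ≠ 0 := by
  subst hα
  rw [Finsupp.finsetSum_apply]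
  exact (Finset.sum_pos' (fun _ _ => Nat.zero_le _) ⟨t, Finset.mem_univ _, by simp⟩).ne'

theorem Module.Basis.ker_le_of_apply_eq_basis {R V W ι κ : Type*} [Ring R]
    [AddCommGroup V] [Module R V] [AddCommGroup W] [Module R W]
    (bV : Module.Basis ι R V) (bW : Module.Basis κ R W) (φ : V →ₗ[R] W) (f : ι → κ)
    (hφ : ∀ i, φ (bV i) = bW (f i)) (P : Submodule R V)
    (hP : ∀ i j, f i = f j → bV i - bV j ∈ P) : LinearMap.ker φ ≤ P := by
  classical
  -- `lift` sends `bW (f i)` to a chosen basis vector over it: `v - lift (φ v) ∈ P` for every `v`.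
  let lift : W →ₗ[R] V := Finsupp.linearCombination R
    (fun k => if h : ∃ i, f i = k then bV h.choose else 0) ∘ₗ bW.repr.toLinearMap
  have hsub : ⊤ ≤ P.comap (LinearMap.id - lift ∘ₗ φ) := by
    rw [← bV.span_eq, Submodule.span_le]
    rintro _ ⟨i, rfl⟩
    have h : ∃ i', f i' = f i := ⟨i, rfl⟩
    simpa [lift, hφ, h] using hP i h.choose h.choose_spec.symm
  intro v hv
  simpa [LinearMap.mem_ker.mp hv] using hsub (Submodule.mem_top (x := v))

section Rees

variable {K : Type*} [Field K] {n q : ℕ}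

noncomputable def facetExp (F : Fin q → Finset (Fin n)) (i : Fin q) : Fin n →₀ ℕ :=
  ∑ x ∈ F i, Finsupp.single x 1

noncomputable def facetExpSum (F : Fin q → Finset (Fin n)) : (Fin q →₀ ℕ) →ₗ[ℕ] (Fin n →₀ ℕ) :=
  Finsupp.linearCombination ℕ (facetExp F)

lemma facetExp_apply (F : Fin q → Finset (Fin n)) (i : Fin q) (x : Fin n) :
    facetExp F i x = if x ∈ F i then 1 else 0 := by
  simp [facetExp, Finsupp.finsetSum_apply, Finsupp.single_apply]

lemma facetExpSum_add_single (F : Fin q → Finset (Fin n)) (d : Fin q →₀ ℕ) (i : Fin q) :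
    facetExpSum F (d + Finsupp.single i 1) = facetExpSum F d + facetExp F i := by
  simp [facetExpSum]

lemma facetMonomial_eq_monomial (F : Fin q → Finset (Fin n)) (i : Fin q) :
    facetMonomial K F i = monomial (facetExp F i) 1 := by
  simp [facetMonomial, facetExp, ← monomial_sum_one, X]

lemma reesHom_monomial (F : Fin q → Finset (Fin n)) (d : Fin q →₀ ℕ) (a : Fin n →₀ ℕ) :
    reesHom K F (monomial d (monomial a 1)) =
      Polynomial.monomial d.degree (monomial (a + facetExpSum F d) (1 : K)) := by
  have hprod : d.prod (fun i k => facetMonomial K F i ^ k) = monomial (facetExpSum F d) 1 := by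
    simp only [facetMonomial_eq_monomial, monomial_pow, one_pow, Finsupp.prod, facetExpSum,
      Finsupp.linearCombination_apply, Finsupp.sum, monomial_sum_one]
  have hX : d.prod (fun _ k => (Polynomial.X : Polynomial (MvPolynomial (Fin n) K)) ^ k) =
      Polynomial.X ^ d.degree := by
    rw [Finsupp.prod, Finset.prod_pow_eq_pow_sum, Finsupp.degree_apply]
  rw [reesHom, aeval_monomial, ← Polynomial.C_mul_X_pow_eq_monomial]
  simp only [mul_pow, Finsupp.prod_mul, ← map_pow, ← map_finsuppProd, hprod, hX,
    Polynomial.algebraMap_eq, ← mul_assoc, ← map_mul, monomial_mul, mul_one]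

noncomputable def reesBinomial (K : Type*) [Field K] {n q : ℕ} (d : Fin q →₀ ℕ)
    (a : Fin n →₀ ℕ) (e : Fin q →₀ ℕ) (b : Fin n →₀ ℕ) :
    MvPolynomial (Fin q) (MvPolynomial (Fin n) K) :=
  monomial d (monomial a 1) - monomial e (monomial b 1)

noncomputable def reesLinearIdeal (K : Type*) [Field K] {n q : ℕ} (F : Fin q → Finset (Fin n)) :
    Ideal (MvPolynomial (Fin q) (MvPolynomial (Fin n) K)) :=
  Ideal.span {g | g ∈ reesIdeal K F ∧ g.IsHomogeneous 1}

lemma reesIdeal_le_of_reesBinomial_mem (F : Fin q → Finset (Fin n))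
    (P : Ideal (MvPolynomial (Fin q) (MvPolynomial (Fin n) K)))
    (hP : ∀ d e a b, a + facetExpSum F d = b + facetExpSum F e → d.degree = e.degree →
      reesBinomial K d a e b ∈ P) :
    reesIdeal K F ≤ P := by
  let bV := (MvPolynomial.basisMonomials (Fin n) K).smulTower
    (MvPolynomial.basisMonomials (Fin q) (MvPolynomial (Fin n) K))
  let bW := (MvPolynomial.basisMonomials (Fin n) K).smulTower
    (Polynomial.basisMonomials (MvPolynomial (Fin n) K))
  have hbV : ∀ ad, bV ad = monomial ad.2 (monomial ad.1 (1 : K)) := by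
    simp [bV, smul_monomial]
  have hbW : ∀ ak, bW ak = Polynomial.monomial ak.2 (monomial ak.1 (1 : K)) := by
    simp [bW, Polynomial.smul_monomial]
  exact bV.ker_le_of_apply_eq_basis bW ((reesHom K F).toLinearMap.restrictScalars K)
    (fun ad => (ad.1 + facetExpSum F ad.2, ad.2.degree))
    (fun ad => by simp [hbV, hbW, reesHom_monomial])
    (P.restrictScalars K)
    (fun ad be h => by
      rw [hbV, hbV]
      exact hP ad.2 be.2 ad.1 be.1 (congrArg Prod.fst h) (congrArg Prod.snd h))

section reesBinomial

variable (F : Fin q → Finset (Fin n)) {d e : Fin q →₀ ℕ} {a b : Fin n →₀ ℕ}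

lemma reesBinomial_mem_reesIdeal (hw : a + facetExpSum F d = b + facetExpSum F e)
    (hdeg : d.degree = e.degree) : reesBinomial K d a e b ∈ reesIdeal K F := by
  simp [reesIdeal, reesBinomial, reesHom_monomial, hw, hdeg]

lemma reesBinomial_mem_reesLinearIdeal_of_degree_eq_one (hd : d.degree = 1) (he : e.degree = 1)
    (hw : a + facetExpSum F d = b + facetExpSum F e) :
    reesBinomial K d a e b ∈ reesLinearIdeal K F :=
  Ideal.subset_span ⟨reesBinomial_mem_reesIdeal F hw (hd.trans he.symm),
    (isHomogeneous_monomial _ hd).sub (isHomogeneous_monomial _ he)⟩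

variable (K) in
lemma reesBinomial_swap : reesBinomial K e b d a = -reesBinomial K d a e b := by
  simp [reesBinomial]

variable (K) in
lemma reesBinomial_add_left (c : Fin q →₀ ℕ) :
    reesBinomial K (c + d) a (c + e) b = monomial c 1 * reesBinomial K d a e b := by
  simp [reesBinomial, mul_sub, monomial_mul]

variable (K) in
lemma reesBinomial_add_single (i j : Fin q) (a' : Fin n →₀ ℕ) :
    reesBinomial K (d + Finsupp.single i 1) a (e + Finsupp.single j 1) b =
      monomial d 1 * reesBinomial K (Finsupp.single i 1) a (Finsupp.single j 1) a' +
        monomial (Finsupp.single j 1) 1 * reesBinomial K d a' e b := by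
  simp only [reesBinomial, mul_sub, monomial_mul, one_mul]
  rw [add_comm (Finsupp.single j 1) d, add_comm (Finsupp.single j 1) e]
  ring

end reesBinomial

lemma reesBinomial_mem_of_exchange (F : Fin q → Finset (Fin n)) {d e : Fin q →₀ ℕ} {i j : Fin q}
    {a b : Fin n →₀ ℕ}
    (hw : a + facetExpSum F (d + Finsupp.single i 1) = b + facetExpSum F (e + Finsupp.single j 1))
    (hlt : ∀ x ∈ F j, x ∉ F i →
      facetExpSum F (d + Finsupp.single i 1) x < facetExpSum F (e + Finsupp.single j 1) x)
    (hsmaller : ∀ a', a' + facetExpSum F d = b + facetExpSum F e →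
      reesBinomial K d a' e b ∈ reesLinearIdeal K F) :
    reesBinomial K (d + Finsupp.single i 1) a (e + Finsupp.single j 1) b ∈
      reesLinearIdeal K F := by
  rw [facetExpSum_add_single, facetExpSum_add_single] at hw hlt
  have hle : facetExp F j ≤ a + facetExp F i := by
    intro x
    by_cases hxj : x ∈ F j
    · by_cases hxi : x ∈ F i
      · simp [facetExp_apply, hxi, hxj]
      · have hwx := DFunLike.congr_fun hw x
        have hltx := hlt x hxj hxi
        simp only [Finsupp.add_apply, facetExp_apply, hxi, hxj, if_true, if_false] at hwx hltx ⊢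
        omega
    · simp [facetExp_apply, hxj]
  set a' := a + facetExp F i - facetExp F j
  have ha' : a' + facetExp F j = a + facetExp F i := tsub_add_cancel_of_le hle
  have hw' : a' + facetExpSum F d = b + facetExpSum F e := by
    refine add_right_cancel (b := facetExp F j) ?_
    rw [add_right_comm, ha', add_right_comm, add_assoc, hw, add_assoc]
  rw [reesBinomial_add_single K i j a']
  refine add_mem (Ideal.mul_mem_left _ _ ?_) (Ideal.mul_mem_left _ _ (hsmaller a' hw'))
  refine reesBinomial_mem_reesLinearIdeal_of_degree_eq_one F (Finsupp.degree_single _ _)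
    (Finsupp.degree_single _ _) ?_
  simpa [facetExpSum] using ha'.symm

lemma walkDeg_eq_facetExpSum (F : Fin q → Finset (Fin n)) {s : ℕ} {α : Fin s → Fin q}
    {d : Fin q →₀ ℕ} (hα : ∑ t, Finsupp.single (α t) 1 = d) (x : Fin n) :
    walkDeg F α x = facetExpSum F d x := by
  subst hα
  simp [walkDeg, facetExpSum, facetExp_apply, Finsupp.finsetSum_apply]

lemma exists_exchange_of_not_isEvenWalk (F : Fin q → Finset (Fin n))
    (hnowalk : ¬ ∃ (s : ℕ) (α β : Fin s → Fin q), IsEvenWalk F α β) {d e : Fin q →₀ ℕ}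
    (hdeg : d.degree = e.degree) (htwo : 2 ≤ d.degree) (hdisj : ∀ i, d i = 0 ∨ e i = 0) :
    ∃ i j, d i ≠ 0 ∧ e j ≠ 0 ∧
      ((∀ x ∈ F j, x ∉ F i → facetExpSum F d x < facetExpSum F e x) ∨
        (∀ x ∈ F i, x ∉ F j → facetExpSum F e x < facetExpSum F d x)) := by
  obtain ⟨α, hα⟩ := Finsupp.exists_fin_sum_single_eq _ d rfl
  obtain ⟨β, hβ⟩ := Finsupp.exists_fin_sum_single_eq _ e hdeg.symm
  by_contra! hno
  refine hnowalk ⟨_, α, β, htwo, ?_, ?_⟩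
  · rw [Set.disjoint_left]
    rintro _ ⟨t, rfl⟩ ⟨u, hu⟩
    rcases hdisj (α t) with h | h
    · exact Finsupp.apply_ne_zero_of_sum_single_eq hα t h
    · exact Finsupp.apply_ne_zero_of_sum_single_eq hβ u (hu ▸ h)
  · rintro _ ⟨t, rfl⟩ _ ⟨u, rfl⟩
    obtain ⟨⟨x, hxj, hxi, hx⟩, ⟨y, hyi, hyj, hy⟩⟩ := hno (α t) (β u)
      (Finsupp.apply_ne_zero_of_sum_single_eq hα t) (Finsupp.apply_ne_zero_of_sum_single_eq hβ u)
    simp only [Set.subset_def, Finset.mem_coe, Finset.mem_sdiff, Set.mem_ofPred_eq,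
      walkDeg_eq_facetExpSum F hα, walkDeg_eq_facetExpSum F hβ]
    exact ⟨fun h => (h y ⟨hyi, hyj⟩).not_ge hy, fun h => (h x ⟨hxj, hxi⟩).not_ge hx⟩

lemma reesBinomial_mem_reesLinearIdeal (F : Fin q → Finset (Fin n))
    (hnowalk : ¬ ∃ (s : ℕ) (α β : Fin s → Fin q), IsEvenWalk F α β) (m : ℕ)
    {d e : Fin q →₀ ℕ} {a b : Fin n →₀ ℕ} (hd : d.degree = m) (he : e.degree = m)
    (hw : a + facetExpSum F d = b + facetExpSum F e) :
    reesBinomial K d a e b ∈ reesLinearIdeal K F := by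
  induction m generalizing d e a b with
  | zero =>
    obtain rfl := (Finsupp.degree_eq_zero_iff d).mp hd
    obtain rfl := (Finsupp.degree_eq_zero_iff e).mp he
    simp_all [reesBinomial]
  | succ m ih =>
    rcases Nat.eq_zero_or_pos m with rfl | hm
    · exact reesBinomial_mem_reesLinearIdeal_of_degree_eq_one F hd he hw
    by_cases hcommon : ∃ i, d i ≠ 0 ∧ e i ≠ 0
    · obtain ⟨i, hdi, hei⟩ := hcommon
      obtain ⟨d, rfl⟩ := Finsupp.exists_eq_add_single_of_ne_zero hdi
      obtain ⟨e, rfl⟩ := Finsupp.exists_eq_add_single_of_ne_zero hei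
      rw [facetExpSum_add_single, facetExpSum_add_single, ← add_assoc, ← add_assoc] at hw
      rw [add_comm d, add_comm e, reesBinomial_add_left]
      exact Ideal.mul_mem_left _ _ (ih (by simpa using hd)
        (by simpa using he) (add_right_cancel hw))
    push Not at hcommon
    obtain ⟨i, j, hdi, hej, hlt | hlt⟩ := exists_exchange_of_not_isEvenWalk F hnowalk
      (hd.trans he.symm) (by omega) fun i => (em (d i = 0)).imp_right (hcommon i)
    · obtain ⟨d, rfl⟩ := Finsupp.exists_eq_add_single_of_ne_zero hdi
      obtain ⟨e, rfl⟩ := Finsupp.exists_eq_add_single_of_ne_zero hej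
      exact reesBinomial_mem_of_exchange F hw hlt fun a' hw' =>
        ih (by simpa using hd) (by simpa using he) hw'
    · obtain ⟨d, rfl⟩ := Finsupp.exists_eq_add_single_of_ne_zero hdi
      obtain ⟨e, rfl⟩ := Finsupp.exists_eq_add_single_of_ne_zero hej
      rw [← neg_neg (reesBinomial K _ _ _ _), ← reesBinomial_swap]
      exact neg_mem (reesBinomial_mem_of_exchange F hw.symm hlt fun b' hw' =>
        ih (by simpa using he) (by simpa using hd) hw')

end Rees

theorem stmt15_general {K : Type*} [Field K] {n q : ℕ}
    (F : Fin q → Finset (Fin n))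
    (hnowalk : ¬ ∃ (s : ℕ) (α β : Fin s → Fin q), IsEvenWalk F α β) :
    IsLinearType K F :=
  le_antisymm
    (reesIdeal_le_of_reesBinomial_mem F _ fun _ _ _ _ hw hdeg =>
      reesBinomial_mem_reesLinearIdeal F hnowalk _ hdeg rfl hw)
    (Ideal.span_le.mpr fun _ hg => hg.1)

theorem stmt15 {K : Type*} [Field K] {n q : ℕ}
    (F : Fin q → Finset (Fin n)) (hF : IsFacetFamily F)
    (hnowalk : ¬ ∃ (s : ℕ) (α β : Fin s → Fin q), IsEvenWalk F α β) :
    IsLinearType K F :=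
  stmt15_general F hnowalk
end
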